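/- arXiv:0809.2879 — 3 statements merged into one kernel-verified Lean document; each statement's English description precedes it below -/
import Mathlib

section
/- Let G and H be finite simple graphs on the same vertex set of size n, both with maximum degree at most d, differing in at most εn edges (edit distance ≤ ε). Then for every rooted (r,d)-ball α, |p_G(α) - p_H(α)| ≤ 4 d^r ε. -/
open MeasureTheory Filter Topology

/-- A rooted `(r,d)`-ball: a finite connected rooted graph with maximum degree at most `d`
in which every vertex is within distance `rad` of the root. -/
structure Ball (d : ℕ) where
  rad : ℕ
  n : ℕ
  graph : SimpleGraph (Fin n)
  root : Fin n
  conn : graph.Connected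
  deg : ∀ v, (graph.neighborSet v).ncard ≤ d
  small : ∀ v, graph.dist root v ≤ rad

/-- Rooted isomorphism of rooted graphs. -/
def RootedIso {V W : Type*} (G : SimpleGraph V) (x : V) (H : SimpleGraph W) (y : W) : Prop :=
  ∃ e : G ≃g H, e x = y

/-- The vertex set of the ball of radius `r` around `x`. -/
def ballVerts {V : Type*} (G : SimpleGraph V) (r : ℕ) (x : V) : Set V :=
  {y | G.Reachable x y ∧ G.dist x y ≤ r}

lemma rootMemBall {V : Type*} (G : SimpleGraph V) (r : ℕ) (x : V) : x ∈ ballVerts G r x :=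
  ⟨SimpleGraph.Reachable.refl x, by simp [SimpleGraph.dist_self]⟩

/-- The rooted `r`-ball of `G` around `x` is rooted-isomorphic to the rooted graph `(H,y)`. -/
def ballIso {V W : Type*} (G : SimpleGraph V) (r : ℕ) (x : V)
    (H : SimpleGraph W) (y : W) : Prop :=
  RootedIso (G.induce (ballVerts G r x)) ⟨x, rootMemBall G r x⟩ H y

/-- `pfreq G α` is the fraction of vertices of `G` whose rooted `α.rad`-ball is
isomorphic to the rooted ball `α`. -/
noncomputable def pfreq {V : Type*} {d : ℕ} (G : SimpleGraph V) (α : Ball d) : ℝ :=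
  ({x : V | ballIso G α.rad x α.graph α.root}).ncard / (Nat.card V)

/-- The statistical distance of two finite graphs with respect to an enumeration `E`
of all rooted `(r,d)`-balls. -/
noncomputable def ds {d : ℕ} (E : ℕ → Ball d) {V W : Type*}
    (G : SimpleGraph V) (H : SimpleGraph W) : ℝ :=
  ∑' i : ℕ, (1 / 2 : ℝ) ^ (i + 1) * |pfreq G (E i) - pfreq H (E i)|

/-- `E` enumerates all rooted `(r,d)`-balls up to rooted isomorphism. -/
def Covers {d : ℕ} (E : ℕ → Ball d) : Prop :=
  ∀ β : Ball d, ∃ i, (E i).rad = β.rad ∧ RootedIso (E i).graph (E i).root β.graph β.root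

/-- Maximum degree of `G` is at most `d`. -/
def DegLe {V : Type*} (G : SimpleGraph V) (d : ℕ) : Prop :=
  ∀ v, (G.neighborSet v).ncard ≤ d

/-! Call a vertex disturbed if its `r`-ball in `G` or in `H` contains a whole edge on which the
two graphs differ. A shortest-path argument shows that an undisturbed vertex has the same rooted
`r`-ball in `G` and in `H`, so `n · |p_G(α) - p_H(α)|` is at most the number of disturbed
vertices. A differing edge `ab` can only disturb the vertices of `B_G(a, r) ∪ B_H(a, r)`, and in
a graph of maximum degree `d ≥ 1` a ball of radius `r` has at most `2 d^r` vertices. -/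

lemma Set.Finite.ncard_biUnion_le_mul {ι α : Type*} {t : Set ι} (ht : t.Finite)
    {s : ι → Set α} {c : ℕ} (hs : ∀ i ∈ t, (s i).ncard ≤ c) :
    (⋃ i ∈ t, s i).ncard ≤ t.ncard * c := by
  calc (⋃ i ∈ t, s i).ncard = (⋃ i ∈ ht.toFinset, s i).ncard := by simp
    _ ≤ ∑ i ∈ ht.toFinset, (s i).ncard := ht.toFinset.set_ncard_biUnion_le s
    _ ≤ ht.toFinset.card * c :=
        Finset.sum_le_card_nsmul _ _ _ fun i hi => hs i (ht.mem_toFinset.1 hi)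
    _ = t.ncard * c := by rw [Set.ncard_eq_toFinset_card t ht]

lemma abs_ncard_sub_ncard_le {α : Type*} [Finite α] {A B K : Set α}
    (h : ∀ x ∉ K, x ∈ A ↔ x ∈ B) : |(A.ncard : ℝ) - B.ncard| ≤ K.ncard := by
  have hAB : A ⊆ B ∪ K := fun x hx => by by_cases hK : x ∈ K <;> simp_all
  have hBA : B ⊆ A ∪ K := fun x hx => by by_cases hK : x ∈ K <;> simp_all
  have h₁ : (A.ncard : ℝ) ≤ B.ncard + K.ncard := by
    exact_mod_cast (Set.ncard_le_ncard hAB).trans (Set.ncard_union_le _ _)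
  have h₂ : (B.ncard : ℝ) ≤ A.ncard + K.ncard := by
    exact_mod_cast (Set.ncard_le_ncard hBA).trans (Set.ncard_union_le _ _)
  rw [abs_sub_le_iff]
  constructor <;> linarith

section

open SimpleGraph

variable {V : Type*} {G H : SimpleGraph V} {r d : ℕ} {x y : V}

lemma mem_ballVerts_comm : y ∈ ballVerts G r x ↔ x ∈ ballVerts G r y := by
  simp [ballVerts, dist_comm, reachable_comm]

lemma ballVerts_zero : ballVerts G 0 x = {x} := by
  ext y
  simp only [ballVerts, Set.mem_ofPred_eq, Set.mem_singleton_iff, Nat.le_zero]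
  constructor
  · rintro ⟨hxy, h⟩
    exact (hxy.dist_eq_zero_iff.mp h).symm
  · rintro rfl
    exact ⟨Reachable.refl _, dist_self⟩

lemma ballVerts_of_forall_not_adj (hx : ∀ y, ¬ G.Adj x y) : ballVerts G r x = {x} := by
  refine Set.eq_singleton_iff_unique_mem.2 ⟨rootMemBall G r x, fun y ⟨⟨p⟩, _⟩ => ?_⟩
  cases p with
  | nil => rfl
  | cons h _ => exact absurd h (hx _)

lemma mem_ballVerts_of_adj (h : G.Adj x y) (hr : 1 ≤ r) : y ∈ ballVerts G r x :=
  ⟨h.reachable, (dist_eq_one_iff_adj.2 h).le.trans hr⟩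

lemma ballVerts_succ_subset :
    ballVerts G (r + 1) x ⊆ insert x (⋃ z ∈ ballVerts G r x, G.neighborSet z) := by
  rintro y ⟨hxy, hdist⟩
  obtain rfl | hyx := eq_or_ne y x
  · exact Set.mem_insert _ _
  obtain ⟨p, hp⟩ := hxy.symm.exists_walk_length_eq_dist
  cases p with
  | nil => exact absurd rfl hyx
  | @cons _ z _ h q =>
    refine Set.mem_insert_of_mem _ (Set.mem_biUnion (x := z) ⟨q.reachable.symm, ?_⟩ h.symm)
    have : q.length + 1 ≤ r + 1 := by rw [dist_comm] at hdist; simpa [← hp] using hdist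
    rw [dist_comm]
    exact (dist_le q).trans (by omega)

lemma ballVerts_succ_subset_of_adj {v : V} (hv : G.Adj x v) (hr : 1 ≤ r) :
    ballVerts G (r + 1) x ⊆ ⋃ z ∈ ballVerts G r x, G.neighborSet z := by
  intro y hy
  rcases ballVerts_succ_subset hy with rfl | hy
  · exact Set.mem_biUnion (mem_ballVerts_of_adj hv hr) hv.symm
  · exact hy

lemma ballVerts_subset_of_edge_mem
    (h : ∀ e ∈ G.edgeSet, (∀ w ∈ e, w ∈ ballVerts G r x) → e ∈ H.edgeSet) :
    ballVerts G r x ⊆ ballVerts H r x := by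
  rintro y ⟨hxy, hdist⟩
  obtain ⟨p, hp⟩ := hxy.exists_walk_length_eq_dist
  have hlen : p.length ≤ r := hp ▸ hdist
  have hsupp : ∀ w ∈ p.support, w ∈ ballVerts G r x := by
    classical
    exact fun w hw => ⟨⟨p.takeUntil w hw⟩,
      (dist_le _).trans ((p.length_takeUntil_le_length hw).trans hlen)⟩
  have hedges : ∀ e ∈ p.edges, e ∈ H.edgeSet := fun e he =>
    h e (p.edges_subset_edgeSet he) fun w hw => hsupp w (Walk.mem_support_of_mem_edges he hw)
  exact ⟨⟨p.transfer H hedges⟩, (dist_le _).trans (by rwa [p.length_transfer hedges])⟩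

lemma ballIso_congr {W : Type*} (A : SimpleGraph W) (ρ : W)
    (hs : ballVerts G r x = ballVerts H r x)
    (hadj : ∀ a ∈ ballVerts G r x, ∀ b ∈ ballVerts G r x, G.Adj a b ↔ H.Adj a b) :
    ballIso G r x A ρ ↔ ballIso H r x A ρ := by
  let e : G.induce (ballVerts G r x) ≃g H.induce (ballVerts H r x) :=
    { Equiv.setCongr hs with map_rel_iff' := fun {a b} => (hadj a a.2 b b.2).symm }
  constructor
  · rintro ⟨f, hf⟩
    exact ⟨f.comp e.symm, hf⟩
  · rintro ⟨f, hf⟩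
    exact ⟨f.comp e, hf⟩

def disturbedVerts (G H : SimpleGraph V) (r : ℕ) : Set V :=
  ⋃ e ∈ symmDiff G.edgeSet H.edgeSet,
    {x | (∀ w ∈ e, w ∈ ballVerts G r x) ∨ (∀ w ∈ e, w ∈ ballVerts H r x)}

lemma disturbedVerts_comm : disturbedVerts G H r = disturbedVerts H G r := by
  simp only [disturbedVerts, symmDiff_comm G.edgeSet, or_comm]

lemma mem_edgeSet_iff_of_notMem_disturbedVerts (hx : x ∉ disturbedVerts G H r) {e : Sym2 V}
    (he : ∀ w ∈ e, w ∈ ballVerts G r x) : e ∈ G.edgeSet ↔ e ∈ H.edgeSet := by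
  by_contra hne
  exact hx (Set.mem_biUnion (Set.mem_symmDiff.2 (by tauto)) (Or.inl he))

lemma ballIso_iff_of_notMem_disturbedVerts (hx : x ∉ disturbedVerts G H r)
    {W : Type*} (A : SimpleGraph W) (ρ : W) :
    ballIso G r x A ρ ↔ ballIso H r x A ρ := by
  have hx' : x ∉ disturbedVerts H G r := disturbedVerts_comm (G := G) ▸ hx
  refine ballIso_congr A ρ (subset_antisymm ?_ ?_) fun a ha b hb => ?_
  · exact ballVerts_subset_of_edge_mem fun e _ he =>
      (mem_edgeSet_iff_of_notMem_disturbedVerts hx he).1 ‹_›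
  · exact ballVerts_subset_of_edge_mem fun e _ he =>
      (mem_edgeSet_iff_of_notMem_disturbedVerts hx' he).1 ‹_›
  · refine mem_edgeSet_iff_of_notMem_disturbedVerts hx (e := s(a, b)) ?_
    simp only [Sym2.mem_iff, forall_eq_or_imp, forall_eq]
    exact ⟨ha, hb⟩

section Finite

variable [Finite V]

lemma ncard_biUnion_neighborSet_le (hG : DegLe G d) (s : Set V) :
    (⋃ z ∈ s, G.neighborSet z).ncard ≤ s.ncard * d :=
  s.toFinite.ncard_biUnion_le_mul fun z _ => hG z

/-- Away from isolated vertices `|B_{r+1}| ≤ d |B_r|` once `r ≥ 1`; the bound `2 d^r` rather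
than `d^r` pays for `|B_1| ≤ d + 1`. -/
lemma ncard_ballVerts_le (hd : 1 ≤ d) (hG : DegLe G d) (r : ℕ) (x : V) :
    (ballVerts G r x).ncard ≤ 2 * d ^ r := by
  by_cases hx : ∃ v, G.Adj x v
  swap
  · rw [ballVerts_of_forall_not_adj (not_exists.mp hx), Set.ncard_singleton]
    have := Nat.one_le_pow r d hd
    omega
  obtain ⟨v, hv⟩ := hx
  obtain rfl | hr := Nat.eq_zero_or_pos r
  · simp [ballVerts_zero]
  induction r, hr using Nat.le_induction with
  | base =>
    have hN : (⋃ z ∈ ballVerts G 0 x, G.neighborSet z).ncard ≤ d := by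
      simpa [ballVerts_zero] using ncard_biUnion_neighborSet_le hG (ballVerts G 0 x)
    calc (ballVerts G 1 x).ncard
        ≤ (insert x (⋃ z ∈ ballVerts G 0 x, G.neighborSet z)).ncard :=
          Set.ncard_le_ncard ballVerts_succ_subset
      _ ≤ 2 * d ^ 1 := (Set.ncard_insert_le _ _).trans (by rw [pow_one]; omega)
  | succ r hr ih =>
    calc (ballVerts G (r + 1) x).ncard ≤ (⋃ z ∈ ballVerts G r x, G.neighborSet z).ncard :=
          Set.ncard_le_ncard (ballVerts_succ_subset_of_adj hv hr)
      _ ≤ (ballVerts G r x).ncard * d := ncard_biUnion_neighborSet_le hG _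
      _ ≤ 2 * d ^ r * d := by gcongr
      _ = 2 * d ^ (r + 1) := by ring

lemma ncard_disturbedVerts_le (hd : 1 ≤ d) (hG : DegLe G d) (hH : DegLe H d) (r : ℕ) :
    (disturbedVerts G H r).ncard ≤ (symmDiff G.edgeSet H.edgeSet).ncard * (4 * d ^ r) := by
  refine (Set.toFinite _).ncard_biUnion_le_mul fun e _ => ?_
  induction e using Sym2.ind with
  | _ a b =>
    have hsub : {x | (∀ w ∈ s(a, b), w ∈ ballVerts G r x) ∨
        (∀ w ∈ s(a, b), w ∈ ballVerts H r x)} ⊆ ballVerts G r a ∪ ballVerts H r a := by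
      rintro x (h | h)
      · exact Or.inl (mem_ballVerts_comm.1 (h a (Sym2.mem_mk_left a b)))
      · exact Or.inr (mem_ballVerts_comm.1 (h a (Sym2.mem_mk_left a b)))
    calc _ ≤ (ballVerts G r a ∪ ballVerts H r a).ncard := Set.ncard_le_ncard hsub
      _ ≤ (ballVerts G r a).ncard + (ballVerts H r a).ncard := Set.ncard_union_le _ _
      _ ≤ 2 * d ^ r + 2 * d ^ r :=
          add_le_add (ncard_ballVerts_le hd hG r a) (ncard_ballVerts_le hd hH r a)
      _ = 4 * d ^ r := by ring

end Finite

end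

theorem pfreq_close_of_edit_close_general {d : ℕ} (hd : 1 ≤ d)
    {V : Type} [Finite V] [Nonempty V] (G H : SimpleGraph V)
    (hG : DegLe G d) (hH : DegLe H d) (ε : ℝ)
    (hed : ((symmDiff G.edgeSet H.edgeSet).ncard : ℝ) ≤ ε * Nat.card V) :
    ∀ α : Ball d, |pfreq G α - pfreq H α| ≤ 4 * (d : ℝ) ^ α.rad * ε := by
  intro α
  have hcount := abs_ncard_sub_ncard_le (K := disturbedVerts G H α.rad)
    fun x hx => ballIso_iff_of_notMem_disturbedVerts hx α.graph α.root
  have hK : ((disturbedVerts G H α.rad).ncard : ℝ)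
      ≤ (symmDiff G.edgeSet H.edgeSet).ncard * (4 * (d : ℝ) ^ α.rad) := by
    exact_mod_cast ncard_disturbedVerts_le hd hG hH α.rad
  have hn : (0 : ℝ) < Nat.card V := Nat.cast_pos.2 Nat.card_pos
  rw [pfreq, pfreq, ← sub_div, abs_div, abs_of_pos hn, div_le_iff₀ hn]
  calc _ ≤ _ := hcount
    _ ≤ _ := hK
    _ ≤ ε * Nat.card V * (4 * (d : ℝ) ^ α.rad) := by gcongr
    _ = 4 * (d : ℝ) ^ α.rad * ε * Nat.card V := by ring

/-- If two graphs on the same vertex set of size `n`, both with maximum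
degree at most `d`, differ in at most `ε·n` edges, then for every rooted `(r,d)`-ball
`α` the neighborhood frequencies satisfy `|p_G(α) - p_H(α)| ≤ 4·d^r·ε`. -/
theorem pfreq_close_of_edit_close {d : ℕ} (hd : 1 ≤ d)
    {V : Type} [Finite V] [Nonempty V] (G H : SimpleGraph V)
    (hG : DegLe G d) (hH : DegLe H d) (ε : ℝ) (hε : 0 ≤ ε)
    (hed : ((symmDiff G.edgeSet H.edgeSet).ncard : ℝ) ≤ ε * Nat.card V) :
    ∀ α : Ball d, |pfreq G α - pfreq H α| ≤ 4 * (d : ℝ) ^ α.rad * ε :=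
  pfreq_close_of_edit_close_general hd G H hG hH ε hed
end

section
/- For every finite family of finite connected graphs F_1, ..., F_k and every ε > 0 there exists δ > 0 such that for all finite graphs G, H with maximum degree at most d, if d_s(G,H) ≤ δ then |dens(F_i, G) - dens(F_i, H)| ≤ ε for every 1 ≤ i ≤ k, where dens(F, G) is the number of subgraphs of G isomorphic to F divided by |V(G)|. -/
/-!
A copy of a connected graph `F` on `m` vertices through `x` lies inside the `m`-ball around `x`,
so the number of copies through `x` depends only on the rooted isomorphism type of that ball.
Double counting then writes `m · dens(F, G)` as `∑ p_G(α) c(α)`, summed over the rooted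
radius-`m` balls `α` of the enumeration that are least in their isomorphism class, where `c(α)`
counts the copies of `F` through the root of `α`. Balls of degree `≤ d` and radius `m` have at
most `(d+1)^m` vertices, so this sum is finite and independent of `G`; since
`|p_G(α_i) - p_H(α_i)| ≤ 2^(i+1) d_s(G, H)`, each density is Lipschitz in `d_s`.
-/

open MeasureTheory Filter Topology

/-- The "sparse" `F`-density of `G`: the number of subgraphs of `G` isomorphic to
`F`, divided by the number of vertices of `G`. -/
noncomputable def dens {V : Type*} {m : ℕ} (F : SimpleGraph (Fin m))
    (G : SimpleGraph V) : ℝ :=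
  ({H : G.Subgraph | Nonempty (H.coe ≃g F)}).ncard / (Nat.card V)

open SimpleGraph

namespace RootedIso

variable {U V W : Type*} {G : SimpleGraph U} {H : SimpleGraph V} {K : SimpleGraph W}
  {x : U} {y : V} {z : W}

theorem symm : RootedIso G x H y → RootedIso H y G x :=
  fun ⟨e, he⟩ ↦ ⟨e.symm, by simp [← he]⟩

theorem trans : RootedIso G x H y → RootedIso H y K z → RootedIso G x K z :=
  fun ⟨e, he⟩ ⟨e', he'⟩ ↦ ⟨e.trans e', by simp [he, he']⟩

end RootedIso

namespace SimpleGraph.Subgraph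

variable {α β : Type*} {A : SimpleGraph α} {B : SimpleGraph β}

theorem comap_map_of_embedding (f : A ↪g B) (S : A.Subgraph) :
    (S.map f.toHom).comap f.toHom = S := by
  ext u v
  · simp
  · constructor
    · rintro ⟨-, a, b, h, ha, hb⟩
      rwa [← f.injective ha, ← f.injective hb]
    · exact fun h ↦ ⟨S.adj_sub h, u, v, h, rfl, rfl⟩

theorem map_comap_of_embedding (f : A ↪g B) (T : B.Subgraph) (hT : T.verts ⊆ Set.range f) :
    (T.comap f.toHom).map f.toHom = T := by
  ext u v
  · constructor
    · rintro ⟨a, ha, rfl⟩; exact ha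
    · intro hu
      obtain ⟨a, rfl⟩ := hT hu
      exact ⟨a, hu, rfl⟩
  · constructor
    · rintro ⟨a, b, ⟨-, h⟩, rfl, rfl⟩; exact h
    · intro h
      obtain ⟨a, rfl⟩ := hT (T.edge_vert h)
      obtain ⟨b, rfl⟩ := hT (T.edge_vert h.symm)
      exact ⟨a, b, ⟨f.map_adj_iff.mp (T.adj_sub h), h⟩, rfl, rfl⟩

end SimpleGraph.Subgraph

noncomputable def copyCountAt {m : ℕ} (F : SimpleGraph (Fin m)) {V : Type*}
    (G : SimpleGraph V) (x : V) : ℕ :=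
  {S : G.Subgraph | Nonempty (S.coe ≃g F) ∧ x ∈ S.verts}.ncard

section copyCountAt

variable {m : ℕ} (F : SimpleGraph (Fin m)) {α β : Type*} {A : SimpleGraph α}
  {B : SimpleGraph β}

theorem copyCountAt_eq_of_embedding (f : A ↪g B) (a : α)
    (hf : ∀ T : B.Subgraph, Nonempty (T.coe ≃g F) → f a ∈ T.verts →
      T.verts ⊆ Set.range f) :
    copyCountAt F A a = copyCountAt F B (f a) := by
  have himage : {T : B.Subgraph | Nonempty (T.coe ≃g F) ∧ f a ∈ T.verts} =
      Subgraph.map f.toHom '' {S : A.Subgraph | Nonempty (S.coe ≃g F) ∧ a ∈ S.verts} := by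
    ext T
    constructor
    · rintro ⟨⟨eT⟩, ha⟩
      have hT := Subgraph.map_comap_of_embedding f T (hf T ⟨eT⟩ ha)
      rw [← hT] at eT
      exact ⟨T.comap f.toHom, ⟨⟨(f.toCopy.isoSubgraphMap _).trans eT⟩, ha⟩, hT⟩
    · rintro ⟨S, ⟨⟨eS⟩, ha⟩, rfl⟩
      exact ⟨⟨(f.toCopy.isoSubgraphMap S).symm.trans eS⟩, a, ha, rfl⟩
  rw [copyCountAt, copyCountAt, himage, Set.ncard_image_of_injective]
  exact Function.LeftInverse.injective (Subgraph.comap_map_of_embedding f)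

theorem copyCountAt_eq_of_rootedIso {a : α} {b : β} (h : RootedIso A a B b) :
    copyCountAt F A a = copyCountAt F B b := by
  obtain ⟨e, rfl⟩ := h
  exact copyCountAt_eq_of_embedding F e.toEmbedding a fun _ _ _ v _ ↦ ⟨e.symm v, by simp⟩

end copyCountAt

theorem DegLe.of_embedding {α β : Type*} [Finite β] {A : SimpleGraph α} {B : SimpleGraph β}
    {d : ℕ} (f : A ↪g B) (hB : DegLe B d) : DegLe A d := fun a ↦
  (Set.ncard_le_ncard_of_injOn f (fun _ hb ↦ f.map_adj_iff.mpr hb) f.injective.injOn).trans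
    (hB (f a))

section ballVerts

variable {V : Type*} (G : SimpleGraph V) (r : ℕ) (x : V)

theorem exists_walk_induce_ballVerts {y : V} (hy : y ∈ ballVerts G r x) :
    ∃ q : (G.induce (ballVerts G r x)).Walk ⟨x, rootMemBall G r x⟩ ⟨y, hy⟩,
      q.length ≤ r := by
  classical
  obtain ⟨p, hp⟩ := hy.1.exists_walk_length_eq_dist
  have hsupp : ∀ z ∈ p.support, z ∈ ballVerts G r x := fun z hz ↦
    ⟨⟨p.takeUntil z hz⟩,
      (dist_le _).trans <| (p.length_takeUntil_le_length hz).trans (hp ▸ hy.2)⟩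
  refine ⟨p.induce _ hsupp, ?_⟩
  have hlen : (p.induce _ hsupp).length = p.length :=
    (Walk.length_map _ _).symm.trans (congrArg Walk.length (p.map_induce hsupp))
  exact hlen ▸ hp ▸ hy.2

theorem connected_induce_ballVerts : (G.induce (ballVerts G r x)).Connected :=
  (connected_iff_exists_forall_reachable _).mpr
    ⟨_, fun ⟨_, hy⟩ ↦ (exists_walk_induce_ballVerts G r x hy).elim fun q _ ↦ ⟨q⟩⟩

theorem exists_ball_ballIso [Finite V] {d : ℕ} (hG : DegLe G d) :
    ∃ b : Ball d, b.rad = r ∧ ballIso G r x b.graph b.root := by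
  obtain ⟨n, ⟨e⟩⟩ := Finite.exists_equiv_fin (ballVerts G r x)
  let iso := Iso.map e (G.induce (ballVerts G r x))
  refine ⟨⟨r, n, _, e ⟨x, rootMemBall G r x⟩, ?_, ?_, fun v ↦ ?_⟩, rfl, iso, rfl⟩
  · exact iso.connected_iff.mp (connected_induce_ballVerts G r x)
  · exact hG.of_embedding ((Embedding.induce _).comp iso.symm.toEmbedding)
  · obtain ⟨q, hq⟩ := exists_walk_induce_ballVerts G r x (e.symm v).2
    rw [← e.apply_symm_apply v]
    exact (dist_le (q.map iso.toHom)).trans (q.length_map iso.toHom ▸ hq)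

end ballVerts

section dist

open Finset

variable {V : Type*} {G : SimpleGraph V} {ρ v : V} {j d : ℕ}

theorem exists_adj_dist_le_of_dist_eq_succ (h : G.dist ρ v = j + 1) :
    ∃ u, G.dist ρ u ≤ j ∧ G.Adj u v := by
  have hr : G.Reachable ρ v := .of_dist_ne_zero (by omega)
  obtain ⟨p, hp⟩ := hr.exists_walk_length_eq_dist
  refine ⟨p.getVert j, (dist_le (p.take j)).trans (by simp [Walk.take_length]), ?_⟩
  have hadj := p.adj_getVert_succ (i := j) (by omega)
  rwa [show j + 1 = p.length by omega, Walk.getVert_length] at hadj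

variable [Fintype V]

theorem card_filter_dist_le_succ_le (hG : DegLe G d) (ρ : V) (j : ℕ) :
    #{v | G.dist ρ v ≤ j + 1} ≤ (d + 1) * #{v | G.dist ρ v ≤ j} := by
  classical
  have hsub : ({v | G.dist ρ v ≤ j + 1} : Finset V) ⊆
      ({v | G.dist ρ v ≤ j} : Finset V).biUnion fun u ↦ insert u (G.neighborFinset u) := by
    intro v hv
    simp only [mem_filter_univ, mem_biUnion, mem_insert, mem_neighborFinset] at hv ⊢
    rcases hv.lt_or_eq with hlt | heq
    · exact ⟨v, Nat.lt_succ_iff.mp hlt, .inl rfl⟩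
    · obtain ⟨u, hu, hadj⟩ := exists_adj_dist_le_of_dist_eq_succ heq
      exact ⟨u, hu, .inr hadj⟩
  calc #{v | G.dist ρ v ≤ j + 1}
      ≤ ∑ u ∈ {v | G.dist ρ v ≤ j}, #(insert u (G.neighborFinset u)) :=
        (card_le_card hsub).trans card_biUnion_le
    _ ≤ ∑ _u ∈ {v | G.dist ρ v ≤ j}, (d + 1) := by
        refine sum_le_sum fun u _ ↦ (card_insert_le _ _).trans (Nat.succ_le_succ ?_)
        rw [neighborFinset, ← Set.ncard_eq_toFinset_card']
        exact hG u
    _ = (d + 1) * #{v | G.dist ρ v ≤ j} := by rw [sum_const, smul_eq_mul, mul_comm]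

theorem card_filter_dist_le_le (hG : DegLe G d) (hc : G.Connected) (ρ : V) (j : ℕ) :
    #{v | G.dist ρ v ≤ j} ≤ (d + 1) ^ j := by
  induction j with
  | zero =>
    have hρ : ({v | G.dist ρ v ≤ 0} : Finset V) = {ρ} := by
      ext v
      simp [hc.dist_eq_zero_iff, eq_comm]
    simp [hρ]
  | succ j ih =>
    calc _ ≤ (d + 1) * #{v | G.dist ρ v ≤ j} := card_filter_dist_le_succ_le hG ρ j
      _ ≤ (d + 1) * (d + 1) ^ j := Nat.mul_le_mul_left _ ih
      _ = (d + 1) ^ (j + 1) := (pow_succ' _ _).symm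

end dist

theorem Ball.n_le_pow_rad {d : ℕ} (b : Ball d) : b.n ≤ (d + 1) ^ b.rad := by
  have h := card_filter_dist_le_le b.deg b.conn b.root b.rad
  rwa [Finset.filter_true_of_mem fun v _ ↦ b.small v, Finset.card_univ, Fintype.card_fin] at h

theorem Ball.finite_setOf_rad_eq (d r : ℕ) : {β : Ball d | β.rad = r}.Finite := by
  let code : {β : Ball d | β.rad = r} →
      Σ n : Fin ((d + 1) ^ r + 1), SimpleGraph (Fin n) × Fin n := fun β ↦
    ⟨⟨β.1.n, Nat.lt_succ_of_le (β.1.n_le_pow_rad.trans_eq (congrArg _ β.2))⟩,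
      β.1.graph, β.1.root⟩
  refine Set.finite_coe_iff.mp (Finite.of_injective code ?_)
  rintro ⟨⟨r₁, n₁, g₁, x₁, _⟩, h₁⟩ ⟨⟨r₂, n₂, g₂, x₂, _⟩, h₂⟩ h
  obtain rfl : r₁ = r := h₁
  obtain rfl : r₂ = r₁ := h₂
  simp only [code, Sigma.mk.injEq, Fin.mk.injEq] at h
  obtain ⟨rfl, h⟩ := h
  simp_all

section locality

variable {m : ℕ} {F : SimpleGraph (Fin m)} {V : Type*} {G : SimpleGraph V} {r : ℕ}

theorem verts_subset_ballVerts (hF : F.Connected) (hr : m ≤ r + 1) {S : G.Subgraph}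
    (eS : S.coe ≃g F) {x : V} (hx : x ∈ S.verts) : S.verts ⊆ ballVerts G r x := by
  classical
  intro y hy
  have : Fintype S.verts := .ofEquiv (Fin m) eS.toEquiv.symm
  have hcard : Fintype.card S.verts = m := by simp [Fintype.card_congr eS.toEquiv]
  obtain ⟨p⟩ := (eS.connected_iff.mpr hF).preconnected ⟨x, hx⟩ ⟨y, hy⟩
  have hlen : p.bypass.length < m := hcard ▸ p.bypass_isPath.length_lt
  refine ⟨⟨p.bypass.map S.hom⟩, (dist_le (p.bypass.map S.hom)).trans ?_⟩
  rw [Walk.length_map]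
  omega

theorem copyCountAt_eq_induce_ballVerts (hF : F.Connected) (hr : m ≤ r + 1) (G : SimpleGraph V)
    (x : V) :
    copyCountAt F G x = copyCountAt F (G.induce (ballVerts G r x)) ⟨x, rootMemBall G r x⟩ := by
  refine (copyCountAt_eq_of_embedding F (Embedding.induce _) ⟨x, rootMemBall G r x⟩
    fun T hT hx y hy ↦ ?_).symm
  exact ⟨⟨y, verts_subset_ballVerts hF hr hT.some hx hy⟩, rfl⟩

theorem copyCountAt_eq_of_ballIso (hF : F.Connected) (hr : m ≤ r + 1) {W : Type*}
    {H : SimpleGraph W} {x : V} {y : W} (h : ballIso G r x H y) :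
    copyCountAt F G x = copyCountAt F H y :=
  (copyCountAt_eq_induce_ballVerts hF hr G x).trans (copyCountAt_eq_of_rootedIso F h)

end locality

open Finset in
theorem ncard_copies_mul_eq_sum_copyCountAt {m : ℕ} (F : SimpleGraph (Fin m)) {V : Type*}
    [Fintype V] (G : SimpleGraph V) :
    {S : G.Subgraph | Nonempty (S.coe ≃g F)}.ncard * m = ∑ x, copyCountAt F G x := by
  classical
  set copies : Finset G.Subgraph := {S | Nonempty (S.coe ≃g F)}
  have hcopies : {S : G.Subgraph | Nonempty (S.coe ≃g F)}.ncard = #copies := by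
    rw [Set.ncard_eq_toFinset_card', Set.toFinset_ofPred]
  have hat (x : V) : copyCountAt F G x = #(copies.bipartiteAbove (· ∈ ·.verts) x) := by
    rw [copyCountAt, Set.ncard_eq_toFinset_card', Set.toFinset_ofPred, bipartiteAbove,
      filter_filter]
  have hverts : ∀ S ∈ copies, #((univ : Finset V).bipartiteBelow (· ∈ ·.verts) S) = m := by
    intro S hS
    obtain ⟨eS⟩ := (mem_filter.mp hS).2
    rw [bipartiteBelow, ← Fintype.card_subtype, Fintype.card_congr eS.toEquiv, Fintype.card_fin]
  rw [hcopies, Fintype.sum_congr _ _ hat, sum_card_bipartiteAbove_eq_sum_card_bipartiteBelow,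
    sum_congr rfl hverts, sum_const, smul_eq_mul]

namespace Covers

open scoped Classical

variable {d : ℕ} {E : ℕ → Ball d} (hE : Covers E)

noncomputable def index (β : Ball d) : ℕ := Nat.find (hE β)

theorem rad_index (β : Ball d) : (E (hE.index β)).rad = β.rad := (Nat.find_spec (hE β)).1

theorem rootedIso_index (β : Ball d) :
    RootedIso (E (hE.index β)).graph (E (hE.index β)).root β.graph β.root :=
  (Nat.find_spec (hE β)).2

theorem index_eq_of_rootedIso {β γ : Ball d} (hrad : β.rad = γ.rad)
    (hiso : RootedIso β.graph β.root γ.graph γ.root) : hE.index β = hE.index γ := by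
  unfold index
  exact Nat.find_congr' fun {_} ↦ by
    rw [hrad]
    exact and_congr_right fun _ ↦ ⟨fun h ↦ h.trans hiso, fun h ↦ h.trans hiso.symm⟩

/-- The indices of `E` that are least in their rooted-isomorphism class of radius-`r` balls. -/
noncomputable def indices (r : ℕ) : Finset ℕ :=
  ((Ball.finite_setOf_rad_eq d r).image hE.index).toFinset

theorem mem_indices {r i : ℕ} :
    i ∈ hE.indices r ↔ ∃ β : Ball d, β.rad = r ∧ hE.index β = i := by
  simp [indices]

theorem rad_of_mem_indices {r i : ℕ} (hi : i ∈ hE.indices r) : (E i).rad = r := by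
  obtain ⟨β, hβ, rfl⟩ := hE.mem_indices.mp hi
  rw [hE.rad_index, hβ]

theorem existsUnique_mem_indices_ballIso {V : Type*} [Finite V] {G : SimpleGraph V}
    (hG : DegLe G d) (r : ℕ) (x : V) :
    ∃! i, i ∈ hE.indices r ∧ ballIso G (E i).rad x (E i).graph (E i).root := by
  obtain ⟨β, hβ, hxβ⟩ := exists_ball_ballIso G r x hG
  refine ⟨hE.index β, ⟨hE.mem_indices.mpr ⟨β, hβ, rfl⟩, ?_⟩, ?_⟩
  · rw [hE.rad_index, hβ]
    exact RootedIso.trans hxβ (hE.rootedIso_index β).symm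
  · rintro _ ⟨hi, hxi⟩
    obtain ⟨γ, hγ, rfl⟩ := hE.mem_indices.mp hi
    rw [hE.rad_index, hγ] at hxi
    refine hE.index_eq_of_rootedIso (hγ.trans hβ.symm) ?_
    exact (RootedIso.trans hxi (hE.rootedIso_index γ)).symm.trans hxβ

end Covers

section density

variable {d : ℕ} {E : ℕ → Ball d} (hE : Covers E) {m : ℕ} {F : SimpleGraph (Fin m)}
  {V : Type*} {G : SimpleGraph V}

theorem sum_copyCountAt_eq_sum_indices [Fintype V] (hF : F.Connected) (hG : DegLe G d) :
    ∑ x, copyCountAt F G x = ∑ i ∈ hE.indices m,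
      {x | ballIso G (E i).rad x (E i).graph (E i).root}.ncard *
        copyCountAt F (E i).graph (E i).root := by
  classical
  have hx (x : V) : copyCountAt F G x = ∑ i ∈ hE.indices m,
      if ballIso G (E i).rad x (E i).graph (E i).root then
        copyCountAt F (E i).graph (E i).root else 0 := by
    obtain ⟨i, ⟨hi, hxi⟩, huniq⟩ := hE.existsUnique_mem_indices_ballIso hG m x
    rw [Finset.sum_eq_single_of_mem i hi fun j hj hji ↦
      if_neg fun hxj ↦ hji (huniq j ⟨hj, hxj⟩), if_pos hxi]
    exact copyCountAt_eq_of_ballIso hF (by rw [hE.rad_of_mem_indices hi]; omega) hxi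
  rw [Fintype.sum_congr _ _ hx, Finset.sum_comm]
  refine Finset.sum_congr rfl fun i _ ↦ ?_
  rw [Finset.sum_ite, Finset.sum_const_zero, add_zero, Finset.sum_const, smul_eq_mul,
    Set.ncard_eq_toFinset_card', Set.toFinset_ofPred]

theorem dens_mul_eq_sum_indices [Finite V] (hF : F.Connected) (hG : DegLe G d) :
    dens F G * m = ∑ i ∈ hE.indices m,
      pfreq G (E i) * copyCountAt F (E i).graph (E i).root := by
  have := Fintype.ofFinite V
  have hsum := congrArg (Nat.cast : ℕ → ℝ)
    ((ncard_copies_mul_eq_sum_copyCountAt F G).trans (sum_copyCountAt_eq_sum_indices hE hF hG))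
  push_cast at hsum
  simp only [dens, pfreq, div_mul_eq_mul_div, hsum, Finset.sum_div]

end density

section frequencies

variable {d : ℕ} {V W : Type*}

theorem pfreq_nonneg (G : SimpleGraph V) (α : Ball d) : 0 ≤ pfreq G α := by
  unfold pfreq
  positivity

theorem ds_nonneg (E : ℕ → Ball d) (G : SimpleGraph V) (H : SimpleGraph W) : 0 ≤ ds E G H :=
  tsum_nonneg fun _ ↦ by positivity

theorem pfreq_le_one [Finite V] (G : SimpleGraph V) (α : Ball d) : pfreq G α ≤ 1 :=
  div_le_one_of_le₀ (mod_cast Set.ncard_le_card _) (Nat.cast_nonneg _)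

theorem abs_pfreq_sub_le_mul_ds [Finite V] [Finite W] (E : ℕ → Ball d) (G : SimpleGraph V)
    (H : SimpleGraph W) (i : ℕ) :
    |pfreq G (E i) - pfreq H (E i)| ≤ 2 ^ (i + 1) * ds E G H := by
  have hdiff (j : ℕ) : |pfreq G (E j) - pfreq H (E j)| ≤ 1 :=
    abs_sub_le_of_nonneg_of_le (pfreq_nonneg G _) (pfreq_le_one G _) (pfreq_nonneg H _)
      (pfreq_le_one H _)
  have hsummable : Summable fun j ↦ (1 / 2 : ℝ) ^ (j + 1) * |pfreq G (E j) - pfreq H (E j)| :=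
    .of_nonneg_of_le (fun _ ↦ by positivity)
      (fun j ↦ (mul_le_of_le_one_right (by positivity) (hdiff j)).trans
        (pow_le_pow_of_le_one (by norm_num) (by norm_num) j.le_succ))
      summable_geometric_two
  have hterm : (1 / 2 : ℝ) ^ (i + 1) * |pfreq G (E i) - pfreq H (E i)| ≤ ds E G H :=
    hsummable.le_tsum i fun _ _ ↦ by positivity
  calc |pfreq G (E i) - pfreq H (E i)|
      = 2 ^ (i + 1) * ((1 / 2 : ℝ) ^ (i + 1) * |pfreq G (E i) - pfreq H (E i)|) := by
        rw [← mul_assoc, ← mul_pow]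
        norm_num
    _ ≤ 2 ^ (i + 1) * ds E G H := by gcongr

end frequencies

theorem exists_abs_dens_sub_le_mul_ds {d : ℕ} {E : ℕ → Ball d} (hE : Covers E) {m : ℕ}
    {F : SimpleGraph (Fin m)} (hF : F.Connected) :
    ∃ K : ℝ, 0 ≤ K ∧ ∀ (V W : Type*) [Finite V] [Finite W] (G : SimpleGraph V)
      (H : SimpleGraph W), DegLe G d → DegLe H d → |dens F G - dens F H| ≤ K * ds E G H := by
  have hm : (0 : ℝ) < m := Nat.cast_pos.mpr (Fin.pos_iff_nonempty.mpr hF.nonempty)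
  set c : ℕ → ℝ := fun i ↦ copyCountAt F (E i).graph (E i).root
  refine ⟨(∑ i ∈ hE.indices m, c i * 2 ^ (i + 1)) / m, by positivity,
    fun V W _ _ G H hG hH ↦ ?_⟩
  rw [div_mul_eq_mul_div, le_div_iff₀ hm]
  calc |dens F G - dens F H| * m
      = |∑ i ∈ hE.indices m, (pfreq G (E i) - pfreq H (E i)) * c i| := by
        rw [← abs_of_pos hm, ← abs_mul, sub_mul, dens_mul_eq_sum_indices hE hF hG,
          dens_mul_eq_sum_indices hE hF hH, ← Finset.sum_sub_distrib]
        simp only [sub_mul, c]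
    _ ≤ ∑ i ∈ hE.indices m, |pfreq G (E i) - pfreq H (E i)| * c i := by
        refine (Finset.abs_sum_le_sum_abs _ _).trans_eq (Finset.sum_congr rfl fun i _ ↦ ?_)
        rw [abs_mul, abs_of_nonneg (show 0 ≤ c i by positivity)]
    _ ≤ ∑ i ∈ hE.indices m, 2 ^ (i + 1) * ds E G H * c i := by
        gcongr with i
        exact abs_pfreq_sub_le_mul_ds E G H i
    _ = (∑ i ∈ hE.indices m, c i * 2 ^ (i + 1)) * ds E G H := by
        rw [Finset.sum_mul]
        exact Finset.sum_congr rfl fun i _ ↦ by ring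

theorem dens_close_of_ds_close_general {d : ℕ} (E : ℕ → Ball d) (hE : Covers E)
    (k : ℕ) (m : Fin k → ℕ) (F : ∀ i, SimpleGraph (Fin (m i)))
    (hF : ∀ i, (F i).Connected) (ε : ℝ) (hε : 0 < ε) :
    ∃ δ > (0 : ℝ), ∀ (V W : Type), Finite V → Finite W → Nonempty V → Nonempty W →
      ∀ (G : SimpleGraph V) (H : SimpleGraph W), DegLe G d → DegLe H d →
      ds E G H ≤ δ → ∀ i, |dens (F i) G - dens (F i) H| ≤ ε := by
  choose K hK0 hK using fun i ↦ exists_abs_dens_sub_le_mul_ds hE (hF i)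
  have hsum : 0 ≤ ∑ j, K j := Finset.sum_nonneg fun j _ ↦ hK0 j
  refine ⟨ε / (∑ j, K j + 1), by positivity, fun V W _ _ _ _ G H hG hH hds i ↦ ?_⟩
  calc |dens (F i) G - dens (F i) H|
      ≤ K i * ds E G H := hK i V W G H hG hH
    _ ≤ (∑ j, K j) * (ε / (∑ j, K j + 1)) := by
        gcongr
        · exact ds_nonneg E G H
        · exact Finset.single_le_sum (fun j _ ↦ hK0 j) (Finset.mem_univ i)
    _ ≤ ε := by
        rw [mul_div_assoc', div_le_iff₀ (by positivity)]
        nlinarith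

/-- For any finite family of finite connected graphs `F_1,…,F_k` and
any `ε > 0` there is `δ > 0` such that if two finite graphs of maximum degree at most
`d` satisfy `d_s(G,H) ≤ δ`, then their sparse `F_i`-densities differ by at most `ε`. -/
theorem dens_close_of_ds_close {d : ℕ} (hd : 1 ≤ d) (E : ℕ → Ball d) (hE : Covers E)
    (k : ℕ) (m : Fin k → ℕ) (F : ∀ i, SimpleGraph (Fin (m i)))
    (hF : ∀ i, (F i).Connected) (ε : ℝ) (hε : 0 < ε) :
    ∃ δ > (0 : ℝ), ∀ (V W : Type), Finite V → Finite W → Nonempty V → Nonempty W →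
      ∀ (G : SimpleGraph V) (H : SimpleGraph W), DegLe G d → DegLe H d →
      ds E G H ≤ δ → ∀ i, |dens (F i) G - dens (F i) H| ≤ ε :=
  dens_close_of_ds_close_general E hE k m F hF ε hε
end

section
/- Every Borel graph (a standard Borel space X with a symmetric irreflexive Borel relation R ⊆ X²) in which every vertex has degree at most d admits a Borel proper vertex coloring with d+1 colors: there is a partition of X into d+1 Borel sets such that no two R-related points lie in the same set. -/
open Set

section
variable {X : Type*} [MeasurableSpace X] [StandardBorelSpace X]

private lemma borelColoring_stdBorelPi (k : ℕ) : StandardBorelSpace (Fin k → X) := by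
  letI := upgradeStandardBorel X
  exact ⟨⟨inferInstance, inferInstance, inferInstance⟩⟩

private lemma borelColoring_measurable_nbr
    (R : X → X → Prop) (hmeas : MeasurableSet {p : X × X | R p.1 p.2})
    (d : ℕ) (hdeg : ∀ x, {y | R x y}.Finite ∧ {y | R x y}.ncard ≤ d)
    {B : Set X} (hB : MeasurableSet B) :
    MeasurableSet {x | ∃ y, R x y ∧ y ∈ B} := by
  classical
  obtain ⟨f, hf⟩ := MeasureTheory.exists_measurableEmbedding_real X
  set S : X → Set X := fun x => {y | R x y ∧ y ∈ B} with hS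
  have hsub : ∀ x, S x ⊆ {y | R x y} := fun x y hy => hy.1
  have hSfin : ∀ x, (S x).Finite := fun x => (hdeg x).1.subset (hsub x)
  have hSd : ∀ x, (S x).ncard ≤ d := fun x =>
    le_trans (Set.ncard_le_ncard (hsub x) (hdeg x).1) (hdeg x).2
  set N : ℕ → Set X := fun k =>
    {x | ∃ y : Fin k → X, StrictMono (f ∘ y) ∧ ∀ i, R x (y i) ∧ y i ∈ B} with hN
  have hrangecard : ∀ (k : ℕ) (y : Fin k → X), StrictMono (f ∘ y) →
      (Set.range y).ncard = k := by
    intro k y hy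
    have hinj : Function.Injective y := by
      intro i j h
      exact hy.injective (show (f ∘ y) i = (f ∘ y) j by simp [Function.comp, h])
    rw [← Set.image_univ, Set.ncard_image_of_injective _ hinj, Set.ncard_univ,
      Nat.card_eq_fintype_card, Fintype.card_fin]
  have hcard : ∀ (k : ℕ) (x : X), x ∈ N k ↔ k ≤ (S x).ncard := by
    intro k x
    constructor
    · rintro ⟨y, hy, hall⟩
      have h2 : Set.range y ⊆ S x := by rintro _ ⟨i, rfl⟩; exact hall i
      calc k = (Set.range y).ncard := (hrangecard k y hy).symm
        _ ≤ (S x).ncard := Set.ncard_le_ncard h2 (hSfin x)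
    · intro hk
      have hfin' : (f '' S x).Finite := (hSfin x).image f
      set T : Finset ℝ := hfin'.toFinset with hT
      have hTcard : k ≤ T.card := by
        rw [hT, ← Set.ncard_eq_toFinset_card (f '' S x) hfin',
          Set.ncard_image_of_injective _ hf.injective]
        exact hk
      obtain ⟨t, htT, htcard⟩ := Finset.exists_subset_card_eq hTcard
      set g := t.orderEmbOfFin htcard with hg
      have hmem : ∀ i : Fin k, ∃ z, z ∈ S x ∧ f z = g i := by
        intro i
        have : (g i : ℝ) ∈ T := htT (t.orderEmbOfFin_mem htcard i)
        rw [hT, Set.Finite.mem_toFinset] at this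
        obtain ⟨z, hz, hz2⟩ := this
        exact ⟨z, hz, hz2⟩
      choose z hz1 hz2 using hmem
      refine ⟨z, ?_, fun i => ⟨(hz1 i).1, (hz1 i).2⟩⟩
      have : f ∘ z = fun i => g i := funext fun i => hz2 i
      rw [this]
      exact g.strictMono
  have main : ∀ m k, d + 1 ≤ k + m → MeasurableSet (N k) := by
    intro m
    induction m with
    | zero =>
      intro k hk
      have : N k = ∅ := by
        ext x
        simp only [mem_empty_iff_false, iff_false]
        intro hx
        have := (hcard k x).1 hx
        have := hSd x
        omega
      rw [this]; exact MeasurableSet.empty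
    | succ m ih =>
      intro k hk
      have hk1 : MeasurableSet (N (k + 1)) := ih (k + 1) (by omega)
      haveI := borelColoring_stdBorelPi (X := X) k
      set G : Set (X × (Fin k → X)) :=
        {p | StrictMono (f ∘ p.2) ∧ ∀ i, R p.1 (p.2 i) ∧ p.2 i ∈ B} with hG
      have hGmeas : MeasurableSet G := by
        have : G = {p : X × (Fin k → X) | ∀ i j : Fin k, i < j → f (p.2 i) < f (p.2 j)} ∩
            ⋂ i : Fin k, ({p : X × (Fin k → X) | R p.1 (p.2 i)} ∩ {p | p.2 i ∈ B}) := by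
          ext p
          simp only [hG, mem_setOf_eq, mem_inter_iff, mem_iInter]
          constructor
          · rintro ⟨h1, h2⟩
            exact ⟨fun i j hij => h1 hij, fun i => ⟨(h2 i).1, (h2 i).2⟩⟩
          · rintro ⟨h1, h2⟩
            exact ⟨fun i j hij => h1 i j hij, fun i => ⟨(h2 i).1, (h2 i).2⟩⟩
        rw [this]
        apply MeasurableSet.inter
        · have : {p : X × (Fin k → X) | ∀ i j : Fin k, i < j → f (p.2 i) < f (p.2 j)} =
              ⋂ (i : Fin k) (j : Fin k) (_ : i < j), {p : X × (Fin k → X) | f (p.2 i) < f (p.2 j)} := by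
            ext p; simp [mem_iInter]
          rw [this]
          refine MeasurableSet.iInter fun i => MeasurableSet.iInter fun j =>
            MeasurableSet.iInter fun _ => ?_
          exact measurableSet_lt
            (hf.measurable.comp ((measurable_pi_apply i).comp measurable_snd))
            (hf.measurable.comp ((measurable_pi_apply j).comp measurable_snd))
        · refine MeasurableSet.iInter fun i => MeasurableSet.inter ?_ ?_
          · have : {p : X × (Fin k → X) | R p.1 (p.2 i)} =
                (fun p : X × (Fin k → X) => (p.1, p.2 i)) ⁻¹' {q : X × X | R q.1 q.2} := rfl
            rw [this]
            exact (measurable_fst.prodMk ((measurable_pi_apply i).comp measurable_snd)) hmeas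
          · have : {p : X × (Fin k → X) | p.2 i ∈ B} =
                (fun p : X × (Fin k → X) => p.2 i) ⁻¹' B := rfl
            rw [this]
            exact ((measurable_pi_apply i).comp measurable_snd) hB
      have key : N k \ N (k + 1) =
          Prod.fst '' (G ∩ ((N (k + 1))ᶜ ×ˢ (univ : Set (Fin k → X)))) := by
        ext x
        constructor
        · rintro ⟨⟨y, hy, hall⟩, hx2⟩
          exact ⟨(x, y), ⟨⟨hy, hall⟩, hx2, trivial⟩, rfl⟩
        · rintro ⟨⟨x', y⟩, ⟨⟨hy, hall⟩, hx2, -⟩, rfl⟩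
          exact ⟨⟨y, hy, hall⟩, hx2⟩
      have hinjOn : InjOn Prod.fst (G ∩ ((N (k + 1))ᶜ ×ˢ (univ : Set (Fin k → X)))) := by
        rintro ⟨x, y⟩ ⟨⟨hy, hall⟩, hxc, -⟩ ⟨x', z⟩ ⟨⟨hz, hall'⟩, -, -⟩ (h : x = x')
        subst h
        have hle : (S x).ncard ≤ k := by
          by_contra h'
          exact hxc ((hcard (k + 1) x).2 (by omega))
        have hry : Set.range y = S x := by
          apply Set.eq_of_subset_of_ncard_le
          · rintro _ ⟨i, rfl⟩; exact hall i
          · rw [hrangecard k y hy]; exact hle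
          · exact hSfin x
        have hrz : Set.range z = S x := by
          apply Set.eq_of_subset_of_ncard_le
          · rintro _ ⟨i, rfl⟩; exact hall' i
          · rw [hrangecard k z hz]; exact hle
          · exact hSfin x
        have hrange : Set.range (f ∘ y) = Set.range (f ∘ z) := by
          rw [Set.range_comp, Set.range_comp, hry, hrz]
        have instwf : WellFoundedLT (Fin k) := inferInstance
        have hfeq : f ∘ y = f ∘ z :=
          @Set.range_injOn_strictMono (Fin k) ℝ _ _ instwf (f ∘ y) hy (f ∘ z) hz hrange
        have : y = z := funext fun i => hf.injective (congrFun hfeq i)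
        simp [this]
      have hdiff : MeasurableSet (N k \ N (k + 1)) := by
        rw [key]
        exact (hGmeas.inter (hk1.compl.prod MeasurableSet.univ)).image_of_measurable_injOn
          measurable_fst hinjOn
      have hNeq : N k = N (k + 1) ∪ (N k \ N (k + 1)) := by
        apply subset_antisymm
        · intro x hx
          by_cases h : x ∈ N (k + 1)
          · exact Or.inl h
          · exact Or.inr ⟨hx, h⟩
        · rintro x (hx | hx)
          · exact (hcard k x).2 (le_trans (by omega) ((hcard (k + 1) x).1 hx))
          · exact hx.1
      rw [hNeq]
      exact hk1.union hdiff
  have final : {x | ∃ y, R x y ∧ y ∈ B} = N 1 := by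
    ext x
    simp only [Set.mem_setOf_eq]
    rw [hcard 1 x, Nat.one_le_iff_ne_zero, ← Nat.pos_iff_ne_zero, Set.ncard_pos (hSfin x)]
    exact ⟨fun ⟨y, h1, h2⟩ => ⟨y, h1, h2⟩, fun ⟨y, h⟩ => ⟨y, h.1, h.2⟩⟩
  rw [final]
  exact main d 1 (by omega)

end

/-- **Kechris–Solecki–Todorcevic.** Every Borel graph on a standard Borel
space in which every vertex has degree at most `d` admits a Borel proper vertex coloring
with `d+1` colors. -/
theorem borel_coloring {X : Type*} [MeasurableSpace X] [StandardBorelSpace X]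
    (R : X → X → Prop) (hmeas : MeasurableSet {p : X × X | R p.1 p.2})
    (hsymm : ∀ x y, R x y → R y x) (hirrefl : ∀ x, ¬R x x)
    (d : ℕ) (hdeg : ∀ x, {y | R x y}.Finite ∧ {y | R x y}.ncard ≤ d) :
    ∃ c : X → Fin (d + 1), Measurable c ∧ ∀ x y, R x y → c x ≠ c y := by
  classical
  obtain ⟨f, hf⟩ := MeasureTheory.exists_measurableEmbedding_real X
  obtain ⟨q, hq⟩ : ∃ q : ℕ → ℚ × ℚ, Function.Surjective q :=
    exists_surjective_nat (ℚ × ℚ)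
  set e : ℕ → Set X := fun n => f ⁻¹' (Set.Ioo ((q n).1 : ℝ) ((q n).2 : ℝ)) with he
  have hemeas : ∀ n, MeasurableSet (e n) := fun n => hf.measurable measurableSet_Ioo
  -- coverage
  have hcover : ∀ x, ∃ n, x ∈ e n ∧ ∀ y, R x y → y ∉ e n := by
    intro x
    have hfin : ({y | R x y}).Finite := (hdeg x).1
    set K : Set ℝ := f '' {y | R x y} with hK
    have hKfin : K.Finite := hfin.image f
    have hfx : f x ∉ K := by
      rintro ⟨y, hy, hxy⟩
      have hyx : y = x := hf.injective hxy
      rw [hyx] at hy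
      exact hirrefl x hy
    have hKc : IsClosed K := hKfin.isClosed
    have hnh : Kᶜ ∈ nhds (f x) := hKc.isOpen_compl.mem_nhds hfx
    obtain ⟨ε, hε, hball⟩ := Metric.mem_nhds_iff.1 hnh
    obtain ⟨a, ha1, ha2⟩ := exists_rat_btwn (show f x - ε < f x by linarith)
    obtain ⟨b, hb1, hb2⟩ := exists_rat_btwn (show f x < f x + ε by linarith)
    obtain ⟨n, hn⟩ := hq (a, b)
    refine ⟨n, ?_, ?_⟩
    · have : f x ∈ Set.Ioo ((a : ℝ)) ((b : ℝ)) := ⟨ha2, hb1⟩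
      simp only [he, Set.mem_preimage, hn]
      exact this
    · intro y hy hyn
      simp only [he, Set.mem_preimage, hn] at hyn
      have h1 : f y ∈ Metric.ball (f x) ε := by
        rw [Metric.mem_ball, Real.dist_eq, abs_sub_lt_iff]
        obtain ⟨hya, hyb⟩ := hyn
        constructor <;> [linarith; linarith]
      have h2 : f y ∈ K := ⟨y, hy, rfl⟩
      exact hball h1 h2
  -- independent pieces
  set J : ℕ → Set X := fun n => e n ∩ {x | ∃ y, R x y ∧ y ∈ e n}ᶜ with hJ
  have hJmeas : ∀ n, MeasurableSet (J n) := fun n =>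
    (hemeas n).inter (borelColoring_measurable_nbr R hmeas d hdeg (hemeas n)).compl
  set I : ℕ → Set X := disjointed J with hI
  have hImeas : ∀ n, MeasurableSet (I n) := MeasurableSet.disjointed hJmeas
  have hIJ : ∀ n, I n ⊆ J n := disjointed_subset J
  have hIdisj : ∀ {m n : ℕ}, m ≠ n → ∀ {x}, x ∈ I m → x ∈ I n → False := by
    intro m n hmn x hm hn
    exact Set.disjoint_left.1 (disjoint_disjointed J hmn) hm hn
  have hIcover : ∀ x, ∃ n, x ∈ I n := by
    intro x
    have : x ∈ ⋃ n, J n := by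
      obtain ⟨n, h1, h2⟩ := hcover x
      exact Set.mem_iUnion.2 ⟨n, h1, fun hx => hx.elim (fun y hy => (h2 y hy.1) hy.2)⟩
    rw [← iUnion_disjointed] at this
    exact Set.mem_iUnion.1 this
  have hIindep : ∀ n x y, x ∈ I n → y ∈ I n → R x y → False := by
    intro n x y hx hy hR
    exact (hIJ n hx).2 ⟨y, hR, (hIJ n hy).1⟩
  -- greedy coloring sets
  set nbr : Set X → Set X := fun S => {x | ∃ y, R x y ∧ y ∈ S} with hnbr
  have hnbrmeas : ∀ {S : Set X}, MeasurableSet S → MeasurableSet (nbr S) :=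
    fun hS => borelColoring_measurable_nbr R hmeas d hdeg hS
  set P : ℕ → Fin (d + 1) → Set X := fun n =>
    Nat.rec (motive := fun _ => Fin (d + 1) → Set X) (fun _ => (∅ : Set X))
      (fun n Pn k => Pn k ∪ (I n ∩ (nbr (Pn k))ᶜ ∩ ⋂ j ∈ Finset.Iio k, nbr (Pn j))) n
    with hP
  have hP0 : ∀ k, P 0 k = ∅ := fun _ => rfl
  have hPsucc : ∀ n k, P (n + 1) k =
      P n k ∪ (I n ∩ (nbr (P n k))ᶜ ∩ ⋂ j ∈ Finset.Iio k, nbr (P n j)) := fun _ _ => rfl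
  -- measurability
  have hPmeas : ∀ n k, MeasurableSet (P n k) := by
    intro n
    induction n with
    | zero => intro k; rw [hP0]; exact MeasurableSet.empty
    | succ n ih =>
      intro k
      rw [hPsucc]
      refine (ih k).union (((hImeas n).inter (hnbrmeas (ih k)).compl).inter ?_)
      exact Finset.measurableSet_biInter _ (fun j _ => hnbrmeas (ih j))
  -- membership implies being in some I m, m < n
  have hPstage : ∀ n k x, x ∈ P n k → ∃ m, m < n ∧ x ∈ I m := by
    intro n
    induction n with
    | zero => intro k x hx; rw [hP0] at hx; exact absurd hx (Set.notMem_empty x)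
    | succ n ih =>
      intro k x hx
      rw [hPsucc] at hx
      rcases hx with hx | hx
      · obtain ⟨m, hm, hxm⟩ := ih k x hx
        exact ⟨m, Nat.lt_succ_of_lt hm, hxm⟩
      · exact ⟨n, Nat.lt_succ_self n, hx.1.1⟩
  -- monotonicity
  have hPmono : ∀ {m n : ℕ}, m ≤ n → ∀ k, P m k ⊆ P n k := by
    intro m n hmn
    induction hmn with
    | refl => exact fun k => subset_rfl
    | step h ih => intro k; exact (ih k).trans (by rw [hPsucc]; exact Set.subset_union_left)
  -- disjointness of colors
  have hPdisj : ∀ n k k', k ≠ k' → ∀ x, x ∈ P n k → x ∈ P n k' → False := by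
    intro n
    induction n with
    | zero => intro k k' _ x hx _; rw [hP0] at hx; exact absurd hx (Set.notMem_empty x)
    | succ n ih =>
      have newcase : ∀ (k k' : Fin (d + 1)), k < k' → ∀ x,
          x ∈ I n ∩ (nbr (P n k))ᶜ ∩ ⋂ j ∈ Finset.Iio k, nbr (P n j) →
          x ∈ I n ∩ (nbr (P n k'))ᶜ ∩ ⋂ j ∈ Finset.Iio k', nbr (P n j) → False := by
        intro k k' hkk' x hx hx'
        have h1 : x ∈ nbr (P n k) := by
          have := hx'.2
          rw [Set.mem_iInter₂] at this
          exact this k (Finset.mem_Iio.2 hkk')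
        exact hx.1.2 h1
      intro k k' hkk' x hx hx'
      rw [hPsucc] at hx hx'
      rcases hx with hx | hx <;> rcases hx' with hx' | hx'
      · exact ih k k' hkk' x hx hx'
      · obtain ⟨m, hm, hxm⟩ := hPstage n k x hx
        exact hIdisj (Nat.ne_of_lt hm) hxm hx'.1.1
      · obtain ⟨m, hm, hxm⟩ := hPstage n k' x hx'
        exact hIdisj (Nat.ne_of_lt hm) hxm hx.1.1
      · rcases lt_or_gt_of_ne hkk' with h | h
        · exact newcase k k' h x hx hx'
        · exact newcase k' k h x hx' hx
  -- every element of I n gets a color at stage n+1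
  have hPget : ∀ n x, x ∈ I n → ∃ k, x ∈ P (n + 1) k := by
    intro n x hx
    have hfree : ∃ k : Fin (d + 1), x ∉ nbr (P n k) := by
      by_contra hall
      push_neg at hall
      choose y hy1 hy2 using fun k => hall k
      have hinj : Function.Injective y := by
        intro k k' h
        by_contra hne
        exact hPdisj n k k' hne (y k) (hy2 k) (h ▸ hy2 k')
      have hle : (Set.univ : Set (Fin (d + 1))).ncard ≤ ({y' | R x y'}).ncard := by
        exact Set.ncard_le_ncard_of_injOn y (fun k _ => hy1 k)
          (fun a _ b _ h => hinj h) (hdeg x).1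
      rw [Set.ncard_univ, Nat.card_eq_fintype_card, Fintype.card_fin] at hle
      have := (hdeg x).2
      omega
    set G : Finset (Fin (d + 1)) := Finset.univ.filter (fun k => x ∉ nbr (P n k)) with hG
    have hGne : G.Nonempty := by
      obtain ⟨k, hk⟩ := hfree
      exact ⟨k, by simp [hG, hk]⟩
    set k₀ := G.min' hGne with hk₀
    have hk₀G : k₀ ∈ G := G.min'_mem hGne
    refine ⟨k₀, ?_⟩
    rw [hPsucc]
    refine Or.inr ⟨⟨hx, ?_⟩, ?_⟩
    · have := hk₀G; simp only [hG, Finset.mem_filter] at this; exact this.2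
    · rw [Set.mem_iInter₂]
      intro j hj
      rw [Finset.mem_Iio] at hj
      by_contra hjn
      have hjG : j ∈ G := by simp [hG, hjn]
      exact absurd (G.min'_le j hjG) (not_le.2 hj)
  -- total color classes
  set Q : Fin (d + 1) → Set X := fun k => ⋃ n, P n k with hQ
  have hQmeas : ∀ k, MeasurableSet (Q k) := fun k => MeasurableSet.iUnion (fun n => hPmeas n k)
  have hQdisj : ∀ k k', k ≠ k' → ∀ x, x ∈ Q k → x ∈ Q k' → False := by
    intro k k' hkk' x hx hx'
    obtain ⟨n, hn⟩ := Set.mem_iUnion.1 hx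
    obtain ⟨n', hn'⟩ := Set.mem_iUnion.1 hx'
    exact hPdisj (max n n') k k' hkk' x (hPmono (le_max_left n n') k hn)
      (hPmono (le_max_right n n') k' hn')
  have hQcover : ∀ x, ∃ k, x ∈ Q k := by
    intro x
    obtain ⟨n, hn⟩ := hIcover x
    obtain ⟨k, hk⟩ := hPget n x hn
    exact ⟨k, Set.mem_iUnion.2 ⟨n + 1, hk⟩⟩
  set c : X → Fin (d + 1) := fun x => (hQcover x).choose with hc
  have hcmem : ∀ x, x ∈ Q (c x) := fun x => (hQcover x).choose_spec
  have hcuniq : ∀ x k, x ∈ Q k → c x = k := by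
    intro x k hk
    by_contra h
    exact hQdisj (c x) k h x (hcmem x) hk
  have hcpre : ∀ k, c ⁻¹' {k} = Q k := by
    intro k
    ext x
    simp only [Set.mem_preimage, Set.mem_singleton_iff]
    exact ⟨fun h => h ▸ hcmem x, fun h => hcuniq x k h⟩
  refine ⟨c, ?_, ?_⟩
  · apply measurable_to_countable'
    intro k
    rw [hcpre]
    exact hQmeas k
  · -- properness
    have stage : ∀ z k, z ∈ Q k → ∃ m, z ∈ I m ∧ z ∉ nbr (P m k) ∧ z ∈ P (m + 1) k := by
      intro z k hz
      have hex : ∃ n, z ∈ P n k := Set.mem_iUnion.1 hz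
      have hspec : z ∈ P (Nat.find hex) k := Nat.find_spec hex
      have hne : Nat.find hex ≠ 0 := by
        intro h
        rw [h, hP0] at hspec
        exact absurd hspec (Set.notMem_empty z)
      obtain ⟨m, hm⟩ : ∃ m, Nat.find hex = m + 1 := ⟨Nat.find hex - 1, by omega⟩
      rw [hm] at hspec
      have h1 : z ∈ P (m + 1) k := hspec
      have h2 : z ∉ P m k := by
        intro h
        exact absurd h (Nat.find_min hex (by omega))
      rw [hPsucc] at h1
      rcases h1 with h1 | h1
      · exact absurd h1 h2
      · exact ⟨m, h1.1.1, h1.1.2, by rw [hPsucc]; exact Or.inr h1⟩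
    intro x y hR hcxy
    obtain ⟨m, hxI, hxF, hxP⟩ := stage x (c x) (hcmem x)
    obtain ⟨m', hyI, hyF, hyP⟩ := stage y (c y) (hcmem y)
    rcases lt_trichotomy m m' with h | h | h
    · have hx' : x ∈ P m' (c y) := hcxy ▸ hPmono (by omega : m + 1 ≤ m') (c x) hxP
      exact hyF ⟨x, hsymm x y hR, hx'⟩
    · exact hIindep m x y hxI (h ▸ hyI) hR
    · have hy' : y ∈ P m (c x) := hcxy ▸ hPmono (by omega : m' + 1 ≤ m) (c y) hyP
      exact hxF ⟨y, hR, hy'⟩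
end
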